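/- Assume ob satisfies all axioms 5(a), 5(b), 5(c) (strong), 5(d), 5(e). For every set A, if A ∈ ob X for all X with A ⊆ X, then Set.univ \ A has at most one element. -/

import Mathlib

/-!
If `A` is obligatory in every context containing it, then for each `a ∉ A`, axiom 5(d) lifts
`A ∈ ob (insert a A)` to `{a}ᶜ ∈ ob univ`. For two such points `a ≠ b`, axiom 5(e) restricts
both `{a}ᶜ` and `{b}ᶜ` to the context `{a, b}`, where their intersection is obligatory by 5(c);
but that intersection is disjoint from `{a, b}`, so 5(b) makes `∅` obligatory, against 5(a).
-/

open Set

section Obligation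

variable {W : Type*} (ob : Set W → Set (Set W))

theorem compl_singleton_mem_ob_univ
    (h5d : ∀ X Y Z : Set W, Y ⊆ X → X ⊆ Z → Y ∈ ob X → (Z \ X) ∪ Y ∈ ob Z)
    {A : Set W} {a : W} (ha : a ∉ A) (hA : A ∈ ob (insert a A)) :
    {a}ᶜ ∈ ob univ := by
  have hlift := h5d (insert a A) A univ (subset_insert a A) (subset_univ _) hA
  convert hlift using 1
  ext x
  by_cases hx : x = a
  · simp [hx, ha]
  · by_cases hxA : x ∈ A <;> simp [hx, hxA]

theorem notMem_ob_of_disjoint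
    (h5a : ∀ X : Set W, ∅ ∉ ob X)
    (h5b : ∀ X Y Z : Set W, Y ∩ X = Z ∩ X → (Y ∈ ob X ↔ Z ∈ ob X))
    {X Y : Set W} (hXY : Disjoint Y X) : Y ∉ ob X := fun hY =>
  h5a X ((h5b X Y ∅ (by rw [empty_inter, ← disjoint_iff_inter_eq_empty]; exact hXY)).mp hY)

theorem eq_of_compl_singleton_mem_ob_univ
    (h5a : ∀ X : Set W, ∅ ∉ ob X)
    (h5b : ∀ X Y Z : Set W, Y ∩ X = Z ∩ X → (Y ∈ ob X ↔ Z ∈ ob X))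
    (h5c : ∀ X Y Z : Set W, Y ∈ ob X → Z ∈ ob X → Y ∩ Z ∈ ob X)
    (h5e : ∀ X Y Z : Set W, Y ⊆ X → Z ∈ ob X → Y ∩ Z ≠ ∅ → Z ∈ ob Y)
    {a b : W} (ha : {a}ᶜ ∈ ob univ) (hb : {b}ᶜ ∈ ob univ) : a = b := by
  by_contra hab
  have ha' : {a}ᶜ ∈ ob {a, b} :=
    h5e univ {a, b} _ (subset_univ _) ha (nonempty_iff_ne_empty.mp ⟨b, by simp [Ne.symm hab]⟩)
  have hb' : {b}ᶜ ∈ ob {a, b} :=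
    h5e univ {a, b} _ (subset_univ _) hb (nonempty_iff_ne_empty.mp ⟨a, by simp [hab]⟩)
  have hdisj : Disjoint ({a}ᶜ ∩ {b}ᶜ) ({a, b} : Set W) := by
    rw [← compl_union, ← insert_eq]
    exact disjoint_compl_left
  exact notMem_ob_of_disjoint ob h5a h5b hdisj (h5c _ _ _ ha' hb')

end Obligation

theorem stmt15_general {W : Type*} (ob : Set W → Set (Set W))
    (h5a : ∀ X : Set W, ∅ ∉ ob X)
    (h5b : ∀ X Y Z : Set W, Y ∩ X = Z ∩ X → (Y ∈ ob X ↔ Z ∈ ob X))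
    (h5c : ∀ X Y Z : Set W, Y ∈ ob X → Z ∈ ob X → Y ∩ Z ∈ ob X)
    (h5d : ∀ X Y Z : Set W, Y ⊆ X → X ⊆ Z → Y ∈ ob X → (Z \ X) ∪ Y ∈ ob Z)
    (h5e : ∀ X Y Z : Set W, Y ⊆ X → Z ∈ ob X → Y ∩ Z ≠ ∅ → Z ∈ ob Y) :
    ∀ A : Set W, (∀ X : Set W, A ⊆ X → A ∈ ob X) → (Set.univ \ A).Subsingleton := by
  intro A hA a ha b hb
  have hcompl : ∀ c ∈ univ \ A, {c}ᶜ ∈ ob univ := fun c hc =>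
    compl_singleton_mem_ob_univ ob h5d hc.2 (hA _ (subset_insert c A))
  exact eq_of_compl_singleton_mem_ob_univ ob h5a h5b h5c h5e (hcompl a ha) (hcompl b hb)

theorem stmt15 {W : Type*} [Fintype W] (ob : Set W → Set (Set W))
    (h5a : ∀ X : Set W, ∅ ∉ ob X)
    (h5b : ∀ X Y Z : Set W, Y ∩ X = Z ∩ X → (Y ∈ ob X ↔ Z ∈ ob X))
    (h5c : ∀ X Y Z : Set W, Y ∈ ob X → Z ∈ ob X → Y ∩ Z ∈ ob X)
    (h5d : ∀ X Y Z : Set W, Y ⊆ X → X ⊆ Z → Y ∈ ob X → (Z \ X) ∪ Y ∈ ob Z)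
    (h5e : ∀ X Y Z : Set W, Y ⊆ X → Z ∈ ob X → Y ∩ Z ≠ ∅ → Z ∈ ob Y) :
    ∀ A : Set W, (∀ X : Set W, A ⊆ X → A ∈ ob X) → (Set.univ \ A).Subsingleton :=
  stmt15_general ob h5a h5b h5c h5d h5e
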